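/- Let N ≥ 2, let Ω be a convex bounded domain in ℝ^d, and let u_1,…,u_{N−1} be bounded vector fields from Ω to ℝ^d whose (N−1)-tuple is jointly N-monotone. Then the N-sub-antisymmetric Hamiltonian H of the representation theorem can be chosen so that H(x_1,…,x_N) + H_{2,…,N}(x_1,…,x_N) = 0 for all (x_1,…,x_N) ∈ Ω^N, where H_{2,…,N} denotes the concavification, with respect to the last N−1 variables, of the function K(x_1,…,x_N) = ∑_{i=1}^{N−1} H(σ^i(x_1,…,x_N)); explicitly, H_{2,…,N}(x_1,x_2,…,x_N) = sup{ ∑_{k=1}^{n} λ_k K(x_1, y_2^k, …, y_N^k) : n ∈ ℕ, λ_k ≥ 0, ∑_k λ_k = 1, y_i^k ∈ Ω, ∑_k λ_k (y_2^k,…,y_N^k) = (x_2,…,x_N) }. -/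

import Mathlib

open MeasureTheory Finset
open scoped BigOperators RealInnerProductSpace

noncomputable section

/-- `ℝ^d` as a Euclidean space. -/
abbrev Ed (d : ℕ) := EuclideanSpace ℝ (Fin d)

/-- The cyclic permutation `σ(x₁,…,x_N) = (x₂,…,x_N,x₁)` acting on tuples. -/
def cyc {N : ℕ} {α : Type*} (x : Fin N → α) : Fin N → α := x ∘ finRotate N

/-- The `(N-1)`-tuple `(u 1, …, u (N-1))` is jointly `N`-monotone on `Ω`:
for every cycle `x 1, …, x (2N-1)` of points of `Ω` with `x (N+i) = x i` for
`1 ≤ i ≤ N-1`, one has `∑_{i=1}^{N} ∑_{ℓ=1}^{N-1} ⟨u ℓ (x i), x i - x (i+ℓ)⟩ ≥ 0`. -/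
def JointlyNMonotone (N : ℕ) {d : ℕ} (Ω : Set (Ed d)) (u : ℕ → Ed d → Ed d) : Prop :=
  ∀ x : ℕ → Ed d,
    (∀ i, 1 ≤ i → i ≤ 2 * N - 1 → x i ∈ Ω) →
    (∀ i, 1 ≤ i → i ≤ N - 1 → x (N + i) = x i) →
    0 ≤ ∑ i ∈ Icc 1 N, ∑ ℓ ∈ Icc 1 (N - 1), ⟪u ℓ (x i), x i - x (i + ℓ)⟫

/-- `H` is `N`-sub-antisymmetric on `Ω^N` : `∑_{i=0}^{N-1} H(σ^i x) ≤ 0` on `Ω^N`. -/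
def NSubAntisymmetric (N : ℕ) {d : ℕ} (Ω : Set (Ed d)) (H : (Fin N → Ed d) → ℝ) : Prop :=
  ∀ x : Fin N → Ed d, (∀ i, x i ∈ Ω) → ∑ i ∈ range N, H (cyc^[i] x) ≤ 0

/-- `H` is `N`-antisymmetric on `Ω^N` : `∑_{i=0}^{N-1} H(σ^i x) = 0` on `Ω^N`. -/
def NAntisymmetric (N : ℕ) {d : ℕ} (Ω : Set (Ed d)) (H : (Fin N → Ed d) → ℝ) : Prop :=
  ∀ x : Fin N → Ed d, (∀ i, x i ∈ Ω) → ∑ i ∈ range N, H (cyc^[i] x) = 0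

/-- `u` is `N`-cyclically monotone on `Ω`: for every cycle `x 1, …, x N, x (N+1) = x 1`
of points of `Ω`, `∑_{i=1}^{N} ⟨u (x i), x i - x (i+1)⟩ ≥ 0`. -/
def NCyclicallyMonotone (N : ℕ) {d : ℕ} (Ω : Set (Ed d)) (u : Ed d → Ed d) : Prop :=
  ∀ x : ℕ → Ed d,
    (∀ i, 1 ≤ i → i ≤ N → x i ∈ Ω) → x (N + 1) = x 1 →
    0 ≤ ∑ i ∈ Icc 1 N, ⟪u (x i), x i - x (i + 1)⟫

/-- The concavification, with respect to the last `N-1` variables, of a function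
`K : Ω^N → ℝ`, evaluated at `x = (x₁,…,x_N)`:
`sup { ∑ λₖ K(x₁, y₂ᵏ, …, y_Nᵏ) : λₖ ≥ 0, ∑ λₖ = 1, yᵢᵏ ∈ Ω, ∑ₖ λₖ (y₂ᵏ,…,y_Nᵏ) = (x₂,…,x_N) }`. -/
def concavify₂N (N : ℕ) {d : ℕ} [NeZero N] (Ω : Set (Ed d)) (K : (Fin N → Ed d) → ℝ)
    (x : Fin N → Ed d) : ℝ :=
  sSup {r : ℝ | ∃ n : ℕ, ∃ lam : Fin n → ℝ, ∃ y : Fin n → (Fin N → Ed d),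
    (∀ k, 0 ≤ lam k) ∧ (∑ k, lam k = 1) ∧
    (∀ k, ∀ i : Fin N, y k i ∈ Ω) ∧
    (∀ k, y k 0 = x 0) ∧
    (∀ i : Fin N, i ≠ 0 → ∑ k, lam k • y k i = x i) ∧
    r = ∑ k, lam k * K (y k)}

/-!
Consider the Hamiltonians `H` that vanish off `Ω^N`, are `N`-sub-antisymmetric and convex in the
last `N-1` variables, and dominate the linear part `∑ ℓ, ⟪u ℓ (x 0), x ℓ - x 0⟫`; joint
`N`-monotonicity makes the linear part itself one of them. Such an `H` is bounded above by
`-∑_{i ≥ 1} linearPart ∘ σ^i`, so pointwise suprema of chains stay in the class and Zorn's lemma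
gives a maximal `H`.

Sub-antisymmetry says that `-H` majorizes `K = ∑_{i ≥ 1} H ∘ σ^i`, and `-H` is concave in the last
`N-1` variables, so `H ≤ -H_{2,…,N}`. Moving `H` by `1/N` of the way towards `-H_{2,…,N}` keeps it
in the class: over a cycle, `-H_{2,…,N} ≤ -K` sums to at most `-(N-1)` times the sum of `H`.
Maximality forces `H = -H_{2,…,N}`, which is concave in the first variable since `K` is convex in
it.
-/

open Function

section Cyclic

open Fin.NatCast

variable {α M : Type*} [AddCommMonoid M] {N : ℕ} [NeZero N]

lemma cyc_apply (x : Fin N → α) (i : Fin N) : cyc x i = x (i + 1) := by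
  simp [cyc, finRotate_apply]

lemma cyc_iterate_apply (j : ℕ) (x : Fin N → α) (i : Fin N) : cyc^[j] x i = x (i + j) := by
  induction j generalizing x with
  | zero => simp
  | succ j ih => rw [iterate_succ_apply, ih, cyc_apply, Nat.cast_succ, add_assoc]

lemma cyc_iterate_eq (j : ℕ) (x : Fin N → α) : cyc^[j] x = fun i => x (i + j) :=
  funext (cyc_iterate_apply j x)

lemma cyc_iterate_const (j : ℕ) (a : α) : cyc^[j] (fun _ : Fin N => a) = fun _ => a :=
  funext (cyc_iterate_apply j _)

lemma cyc_iterate_mem {s : Set α} {x : Fin N → α} (hx : ∀ i, x i ∈ s) (j : ℕ) (i : Fin N) :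
    cyc^[j] x i ∈ s := by
  rw [cyc_iterate_apply]
  exact hx _

lemma cyc_iterate_update (j : ℕ) (x : Fin N → α) (k : Fin N) (z : α) :
    cyc^[j] (update x k z) = update (cyc^[j] x) (k - j) z := by
  funext t
  rw [cyc_iterate_apply, update_apply, update_apply, cyc_iterate_apply]
  simp only [eq_sub_iff_add_eq]

lemma sum_range_cyc_iterate (H : (Fin N → α) → M) (x : Fin N → α) :
    ∑ i ∈ range N, H (cyc^[i] x) = ∑ k : Fin N, H fun t => x (t + k) := by
  rw [← Fin.sum_univ_eq_sum_range (fun i => H (cyc^[i] x))]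
  simp only [cyc_iterate_eq, Fin.cast_val_eq_self]

lemma sum_range_cyc_iterate_comp (H : (Fin N → α) → M) (x : Fin N → α) (j : ℕ) :
    ∑ i ∈ range N, H (cyc^[i] (cyc^[j] x)) = ∑ i ∈ range N, H (cyc^[i] x) := by
  simp only [sum_range_cyc_iterate, cyc_iterate_apply, add_assoc]
  exact Equiv.sum_comp (Equiv.addRight (j : Fin N)) fun k => H fun t => x (t + k)

def cycShiftSum (H : (Fin N → α) → M) (x : Fin N → α) : M :=
  ∑ i ∈ Icc 1 (N - 1), H (cyc^[i] x)

lemma sum_range_cyc_iterate_eq_add_cycShiftSum (H : (Fin N → α) → M) (x : Fin N → α) :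
    ∑ i ∈ range N, H (cyc^[i] x) = H x + cycShiftSum H x := by
  have hIcc : Icc 1 (N - 1) = Ico 1 N := by
    ext i
    simp only [mem_Icc, mem_Ico]
    omega
  rw [cycShiftSum, hIcc, range_eq_Ico, sum_eq_sum_Ico_succ_bot (NeZero.pos N),
    iterate_zero_apply]

lemma sum_range_cycShiftSum_cyc_iterate (H : (Fin N → α) → M) (x : Fin N → α) :
    ∑ j ∈ range N, cycShiftSum H (cyc^[j] x) = (N - 1) • ∑ j ∈ range N, H (cyc^[j] x) := by
  have hshift : ∀ i, ∑ j ∈ range N, H (cyc^[i] (cyc^[j] x)) = ∑ j ∈ range N, H (cyc^[j] x) :=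
    fun i => by
      simp only [← iterate_add_apply, add_comm i]
      simp only [iterate_add_apply, sum_range_cyc_iterate_comp]
  simp only [cycShiftSum]
  rw [sum_comm, sum_congr rfl fun i _ => hshift i, sum_const, Nat.card_Icc, Nat.add_sub_cancel]

lemma Fin.natCast_ne_zero_of_mem_Icc {ℓ : ℕ} (hℓ : ℓ ∈ Icc 1 (N - 1)) : (ℓ : Fin N) ≠ 0 := by
  rw [mem_Icc] at hℓ
  rw [Ne, Fin.natCast_eq_zero]
  intro hdvd
  have := Nat.le_of_dvd (by omega) hdvd
  omega

end Cyclic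

section FunctionUpdate

variable {ι E : Type*} {s : Set E}

lemma update_mem_of_forall_mem [DecidableEq ι] {x : ι → E} (hx : ∀ i, x i ∈ s) (j : ι) {z : E}
    (hz : z ∈ s) (i : ι) : update x j z i ∈ s := by
  rcases eq_or_ne i j with rfl | hi
  · simpa
  · simpa [update_of_ne hi] using hx i

variable [AddCommGroup E] [Module ℝ E]

lemma convex_setOf_forall_mem (hs : Convex ℝ s) : Convex ℝ {y : ι → E | ∀ i, y i ∈ s} :=
  fun _ hy _ hw _ _ ha hb hab i => hs (hy i) (hw i) ha hb hab

variable [DecidableEq ι]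

lemma smul_update_add_smul_update (a b : ℝ) (y w : ι → E) (j : ι) (p q : E) :
    a • update y j p + b • update w j q = update (a • y + b • w) j (a • p + b • q) := by
  rw [update_add, update_smul, update_smul]

lemma ConvexOn.comp_update (hs : Convex ℝ s) {F : (ι → E) → ℝ}
    (hF : ConvexOn ℝ {y | ∀ i, y i ∈ s} F) {w : ι → E} (hw : ∀ i, w i ∈ s) (j : ι) :
    ConvexOn ℝ s fun z => F (update w j z) := by
  refine ⟨hs, fun p hp q hq a b ha hb hab => ?_⟩
  have := hF.2 (update_mem_of_forall_mem hw j hp) (update_mem_of_forall_mem hw j hq) ha hb hab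
  rwa [smul_update_add_smul_update, Convex.combo_self hab] at this

end FunctionUpdate

section LinearPart

open Fin.NatCast

variable {d N : ℕ} [NeZero N] {Ω : Set (Ed d)}

def linearPart (u : ℕ → Ed d → Ed d) (x : Fin N → Ed d) : ℝ :=
  ∑ ℓ ∈ Icc 1 (N - 1), ⟪u ℓ (x 0), x ℓ - x 0⟫

lemma linearPart_update_zero (u : ℕ → Ed d → Ed d) (y : Fin N → Ed d) (x₁ : Ed d) :
    linearPart u (update y 0 x₁) = ∑ ℓ ∈ Icc 1 (N - 1), ⟪u ℓ x₁, y ℓ - x₁⟫ :=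
  sum_congr rfl fun ℓ hℓ => by
    rw [update_self, update_of_ne (Fin.natCast_ne_zero_of_mem_Icc hℓ)]

lemma linearPart_const (u : ℕ → Ed d → Ed d) (z : Ed d) :
    linearPart u (fun _ : Fin N => z) = 0 := by
  simp [linearPart]

lemma convexOn_linearPart_update_zero (hΩ : Convex ℝ Ω) (u : ℕ → Ed d → Ed d) (x₁ : Ed d) :
    ConvexOn ℝ {y : Fin N → Ed d | ∀ i, y i ∈ Ω} fun y => linearPart u (update y 0 x₁) := by
  refine ⟨convex_setOf_forall_mem hΩ, fun y _ w _ a b _ _ hab => le_of_eq ?_⟩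
  have hcomb : ∀ ℓ : Fin N, (a • y + b • w) ℓ - x₁ = a • (y ℓ - x₁) + b • (w ℓ - x₁) :=
    fun ℓ => by
      rw [Pi.add_apply, Pi.smul_apply, Pi.smul_apply, smul_sub, smul_sub,
        sub_add_sub_comm, Convex.combo_self hab]
  simp only [linearPart_update_zero, hcomb, inner_add_right, inner_smul_right, sum_add_distrib,
    mul_sum, smul_eq_mul]

lemma JointlyNMonotone.nSubAntisymmetric_linearPart {u : ℕ → Ed d → Ed d}
    (hu : JointlyNMonotone N Ω u) : NSubAntisymmetric N Ω (linearPart u) := by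
  intro x hx
  -- the cycle `i ↦ x (i - 1)`, indices mod `N`; its `(j+1)`-st row is `-linearPart u (σ^j x)`
  have hcycle := hu (fun i => x ((i : Fin N) - 1)) (fun i _ _ => hx _) fun i _ _ => by
    simp
  have hIcc : Icc 1 N = Ico 1 (N + 1) := rfl
  rw [hIcc, sum_Ico_eq_sum_range, Nat.add_sub_cancel] at hcycle
  have hterm : ∀ j : ℕ, linearPart u (cyc^[j] x)
      = -∑ ℓ ∈ Icc 1 (N - 1), ⟪u ℓ (x (((1 + j : ℕ) : Fin N) - 1)),
          x (((1 + j : ℕ) : Fin N) - 1) - x (((1 + j + ℓ : ℕ) : Fin N) - 1)⟫ := by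
    intro j
    rw [linearPart, ← sum_neg_distrib]
    refine sum_congr rfl fun ℓ _ => ?_
    rw [← inner_neg_right, neg_sub, cyc_iterate_apply, cyc_iterate_apply]
    push_cast
    rw [zero_add, add_assoc, add_sub_cancel_left, add_sub_cancel_left, add_comm (ℓ : Fin N)]
  simp only [hterm, sum_neg_distrib]
  linarith

end LinearPart

section SupremumLemmas

lemma Directed.sum_ciSup_le {ι κ : Type*} [Nonempty ι] {f : ι → κ → ℝ}
    (hf : Directed (· ≤ ·) f) (s : Finset κ) {C : ℝ} (hC : ∀ i, ∑ k ∈ s, f i k ≤ C) :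
    ∑ k ∈ s, ⨆ i, f i k ≤ C := by
  classical
  refine le_of_forall_pos_le_add fun ε hε => ?_
  set δ := ε / (#s + 1)
  have hδ : 0 < δ := by positivity
  choose i hi using fun k => exists_lt_of_lt_ciSup (sub_lt_self (⨆ i, f i k) hδ)
  obtain ⟨i₀, hi₀⟩ := hf.finset_le (s.image i)
  calc ∑ k ∈ s, ⨆ i, f i k
      ≤ ∑ k ∈ s, (f i₀ k + δ) := sum_le_sum fun k hk => by
        linarith [hi k, hi₀ (i k) (mem_image_of_mem i hk) k]
    _ = ∑ k ∈ s, f i₀ k + #s * δ := by rw [sum_add_distrib, sum_const, nsmul_eq_mul]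
    _ ≤ C + ε := by
        refine add_le_add (hC i₀) ?_
        rw [← mul_div_assoc, div_le_iff₀ (by positivity)]
        nlinarith

lemma ConvexOn.ciSup {ι E : Type*} [Nonempty ι] [AddCommGroup E] [Module ℝ E] {s : Set E}
    {f : ι → E → ℝ} (hs : Convex ℝ s) (hf : ∀ i, ConvexOn ℝ s (f i))
    (hbdd : ∀ x ∈ s, BddAbove (Set.range fun i => f i x)) : ConvexOn ℝ s fun x => ⨆ i, f i x :=
  ⟨hs, fun x hx y hy _ _ ha hb hab => ciSup_le fun i => ((hf i).2 hx hy ha hb hab).trans <|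
    add_le_add (smul_le_smul_of_nonneg_left (le_ciSup (hbdd x hx) i) ha)
      (smul_le_smul_of_nonneg_left (le_ciSup (hbdd y hy) i) hb)⟩

lemma Real.mul_sSup_add_mul_sSup_le {s t u : Set ℝ} {a b : ℝ} (ha : 0 ≤ a) (hb : 0 ≤ b)
    (hs : s.Nonempty) (hs' : BddAbove s) (ht : t.Nonempty) (ht' : BddAbove t)
    (hu : BddAbove u) (hstu : ∀ r ∈ s, ∀ r' ∈ t, a * r + b * r' ∈ u) :
    a * sSup s + b * sSup t ≤ sSup u := by
  rw [← smul_eq_mul, ← smul_eq_mul, ← Real.sSup_smul_of_nonneg ha, ← Real.sSup_smul_of_nonneg hb,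
    ← csSup_add (hs.smul_set) (hs'.smul_of_nonneg ha) (ht.smul_set) (ht'.smul_of_nonneg hb)]
  refine csSup_le_csSup hu (hs.smul_set.add ht.smul_set) ?_
  rintro _ ⟨_, ⟨r, hr, rfl⟩, _, ⟨r', hr', rfl⟩, rfl⟩
  exact hstu r hr r' hr'

end SupremumLemmas

section Concavification

variable {d N : ℕ} [NeZero N] {Ω : Set (Ed d)} {K : (Fin N → Ed d) → ℝ} {x : Fin N → Ed d}

def concavifySet (Ω : Set (Ed d)) (K : (Fin N → Ed d) → ℝ) (x : Fin N → Ed d) : Set ℝ :=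
  {r : ℝ | ∃ n : ℕ, ∃ lam : Fin n → ℝ, ∃ y : Fin n → (Fin N → Ed d),
    (∀ k, 0 ≤ lam k) ∧ (∑ k, lam k = 1) ∧
    (∀ k, ∀ i : Fin N, y k i ∈ Ω) ∧
    (∀ k, y k 0 = x 0) ∧
    (∀ i : Fin N, i ≠ 0 → ∑ k, lam k • y k i = x i) ∧
    r = ∑ k, lam k * K (y k)}

lemma concavify₂N_eq_sSup : concavify₂N N Ω K x = sSup (concavifySet Ω K x) := rfl

lemma mem_concavifySet_self (hx : ∀ i, x i ∈ Ω) : K x ∈ concavifySet Ω K x :=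
  ⟨1, fun _ => 1, fun _ => x, fun _ => zero_le_one, by simp, fun _ => hx, fun _ => rfl,
    fun _ _ => by simp, by simp⟩

lemma sum_mem_concavifySet_update {n : ℕ} {lam : Fin n → ℝ} {y : Fin n → Fin N → Ed d}
    (hlam : ∀ k, 0 ≤ lam k) (hsum : ∑ k, lam k = 1) (hy : ∀ k i, y k i ∈ Ω)
    (havg : ∀ i, i ≠ 0 → ∑ k, lam k • y k i = x i) {z : Ed d} (hz : z ∈ Ω) :
    ∑ k, lam k * K (update (y k) 0 z) ∈ concavifySet Ω K (update x 0 z) :=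
  ⟨n, lam, fun k => update (y k) 0 z, hlam, hsum,
    fun k => update_mem_of_forall_mem (hy k) 0 hz, fun _ => by simp,
    fun i hi => by simp only [update_of_ne hi, havg i hi], rfl⟩

lemma add_mem_concavifySet {w : Fin N → Ed d} {r₁ r₂ a b : ℝ}
    (hr₁ : r₁ ∈ concavifySet Ω K x) (hr₂ : r₂ ∈ concavifySet Ω K w) (h0 : x 0 = w 0)
    (ha : 0 ≤ a) (hb : 0 ≤ b) (hab : a + b = 1) :
    a * r₁ + b * r₂ ∈ concavifySet Ω K (a • x + b • w) := by
  obtain ⟨n, lam, y, hlam, hsum, hy, hy0, havg, rfl⟩ := hr₁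
  obtain ⟨m, mu, v, hmu, hsum', hv, hv0, havg', rfl⟩ := hr₂
  refine ⟨n + m, Fin.append (a • lam) (b • mu), Fin.append y v, ?_, ?_, ?_, ?_, ?_, ?_⟩
  · refine Fin.addCases (fun k => ?_) (fun k => ?_) <;>
      simp only [Fin.append_left, Fin.append_right, Pi.smul_apply, smul_eq_mul]
    exacts [mul_nonneg ha (hlam k), mul_nonneg hb (hmu k)]
  · simp [Fin.sum_univ_add, ← mul_sum, hsum, hsum', hab]
  · refine Fin.addCases (fun k => ?_) (fun k => ?_) <;>
      simp only [Fin.append_left, Fin.append_right]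
    exacts [hy k, hv k]
  · refine Fin.addCases (fun k => ?_) (fun k => ?_) <;>
      simp only [Fin.append_left, Fin.append_right, Pi.add_apply, Pi.smul_apply, hy0, hv0, ← h0,
        Convex.combo_self hab]
  · intro i hi
    simp [Fin.sum_univ_add, mul_smul, ← smul_sum, havg i hi, havg' i hi]
  · simp [Fin.sum_univ_add, mul_sum, mul_assoc]

lemma le_of_mem_concavifySet {g : (Fin N → Ed d) → ℝ}
    (hKg : ∀ y, (∀ i, y i ∈ Ω) → K y ≤ g y)
    (hg : ∀ x₁ ∈ Ω, ConcaveOn ℝ {y : Fin N → Ed d | ∀ i, y i ∈ Ω} fun y => g (update y 0 x₁))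
    (hx : ∀ i, x i ∈ Ω) {r : ℝ} (hr : r ∈ concavifySet Ω K x) : r ≤ g x := by
  obtain ⟨n, lam, y, hlam, hsum, hy, hy0, havg, rfl⟩ := hr
  have hbary : ∑ k, lam k • y k = x := by
    funext i
    rw [Finset.sum_apply]
    rcases eq_or_ne i 0 with rfl | hi
    · simp only [Pi.smul_apply, hy0, ← sum_smul, hsum, one_smul]
    · exact havg i hi
  have hy_eq : ∀ k, update (y k) 0 (x 0) = y k := fun k => by rw [← hy0 k, update_eq_self]
  calc ∑ k, lam k * K (y k)
      ≤ ∑ k, lam k • g (update (y k) 0 (x 0)) :=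
        sum_le_sum fun k _ => by
          rw [hy_eq, smul_eq_mul]
          exact mul_le_mul_of_nonneg_left (hKg _ (hy k)) (hlam k)
    _ ≤ g (update (∑ k, lam k • y k) 0 (x 0)) :=
        (hg (x 0) (hx 0)).le_map_sum (fun k _ => hlam k) hsum fun k _ => hy k
    _ = g x := by rw [hbary, update_eq_self]

lemma concavify₂N_le {g : (Fin N → Ed d) → ℝ} (hKg : ∀ y, (∀ i, y i ∈ Ω) → K y ≤ g y)
    (hg : ∀ x₁ ∈ Ω, ConcaveOn ℝ {y : Fin N → Ed d | ∀ i, y i ∈ Ω} fun y => g (update y 0 x₁))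
    (hx : ∀ i, x i ∈ Ω) : concavify₂N N Ω K x ≤ g x :=
  csSup_le ⟨_, mem_concavifySet_self hx⟩ fun _ => le_of_mem_concavifySet hKg hg hx

lemma le_concavify₂N (hbdd : BddAbove (concavifySet Ω K x)) (hx : ∀ i, x i ∈ Ω) :
    K x ≤ concavify₂N N Ω K x :=
  le_csSup hbdd (mem_concavifySet_self hx)

lemma concaveOn_concavify₂N_update_zero (hΩ : Convex ℝ Ω)
    (hbdd : ∀ y : Fin N → Ed d, (∀ i, y i ∈ Ω) → BddAbove (concavifySet Ω K y))
    {x₁ : Ed d} (hx₁ : x₁ ∈ Ω) :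
    ConcaveOn ℝ {y : Fin N → Ed d | ∀ i, y i ∈ Ω} fun y => concavify₂N N Ω K (update y 0 x₁) := by
  refine ⟨convex_setOf_forall_mem hΩ, fun y hy w hw a b ha hb hab => ?_⟩
  have hy' := update_mem_of_forall_mem hy 0 hx₁
  have hw' := update_mem_of_forall_mem hw 0 hx₁
  have hcomb : a • update y 0 x₁ + b • update w 0 x₁ = update (a • y + b • w) 0 x₁ := by
    rw [smul_update_add_smul_update, Convex.combo_self hab]
  simp only [concavify₂N_eq_sSup, smul_eq_mul, ← hcomb]
  refine Real.mul_sSup_add_mul_sSup_le ha hb ⟨_, mem_concavifySet_self hy'⟩ (hbdd _ hy')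
    ⟨_, mem_concavifySet_self hw'⟩ (hbdd _ hw') (hbdd _ ?_) fun r₁ h₁ r₂ h₂ =>
      add_mem_concavifySet h₁ h₂ (by simp) ha hb hab
  rw [hcomb]
  exact update_mem_of_forall_mem (fun i => hΩ (hy i) (hw i) ha hb hab) 0 hx₁

lemma convexOn_concavify₂N_update_zero
    (hbdd : ∀ y : Fin N → Ed d, (∀ i, y i ∈ Ω) → BddAbove (concavifySet Ω K y))
    (hK : ∀ y : Fin N → Ed d, (∀ i, y i ∈ Ω) → ConvexOn ℝ Ω fun z => K (update y 0 z))
    (hx : ∀ i, x i ∈ Ω) : ConvexOn ℝ Ω fun z => concavify₂N N Ω K (update x 0 z) := by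
  refine ⟨(hK x hx).1, fun p hp q hq a b ha hb hab => ?_⟩
  have hpq : a • p + b • q ∈ Ω := (hK x hx).1 hp hq ha hb hab
  simp only [concavify₂N_eq_sSup, smul_eq_mul]
  refine csSup_le ⟨_, mem_concavifySet_self (update_mem_of_forall_mem hx 0 hpq)⟩ ?_
  rintro _ ⟨n, lam, y, hlam, hsum, hy, hy0, havg, rfl⟩
  have hy_eq : ∀ k, y k = update (y k) 0 (a • p + b • q) := fun k => by
    rw [← update_self 0 (a • p + b • q) x, ← hy0 k, update_eq_self]
  have hmem : ∀ {z}, z ∈ Ω → ∑ k, lam k * K (update (y k) 0 z) ∈ concavifySet Ω K (update x 0 z) :=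
    fun hz => by simpa only [update_idem] using sum_mem_concavifySet_update hlam hsum hy havg hz
  calc ∑ k, lam k * K (y k)
      ≤ ∑ k, lam k * (a * K (update (y k) 0 p) + b * K (update (y k) 0 q)) :=
        sum_le_sum fun k _ => mul_le_mul_of_nonneg_left
          (by simpa [← hy_eq] using (hK (y k) (hy k)).2 hp hq ha hb hab) (hlam k)
    _ = a * ∑ k, lam k * K (update (y k) 0 p) + b * ∑ k, lam k * K (update (y k) 0 q) := by
        simp only [mul_sum, ← sum_add_distrib]
        exact sum_congr rfl fun k _ => by ring
    _ ≤ a * sSup (concavifySet Ω K (update x 0 p)) + b * sSup (concavifySet Ω K (update x 0 q)) :=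
        add_le_add
          (mul_le_mul_of_nonneg_left (le_csSup (hbdd _ (update_mem_of_forall_mem hx 0 hp))
            (hmem hp)) ha)
          (mul_le_mul_of_nonneg_left (le_csSup (hbdd _ (update_mem_of_forall_mem hx 0 hq))
            (hmem hq)) hb)

end Concavification

section Admissible

open Fin.NatCast

variable {d N : ℕ} [NeZero N] {Ω : Set (Ed d)} {u : ℕ → Ed d → Ed d}
  {H : (Fin N → Ed d) → ℝ} {x : Fin N → Ed d}

lemma NSubAntisymmetric.cycShiftSum_le_neg (hH : NSubAntisymmetric N Ω H) (hx : ∀ i, x i ∈ Ω) :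
    cycShiftSum H x ≤ -H x := by
  have := hH x hx
  rw [sum_range_cyc_iterate_eq_add_cycShiftSum] at this
  linarith

lemma convexOn_cycShiftSum_update_zero (hΩ : Convex ℝ Ω)
    (hH : ∀ x₁ ∈ Ω, ConvexOn ℝ {y : Fin N → Ed d | ∀ i, y i ∈ Ω} fun y => H (update y 0 x₁))
    {y : Fin N → Ed d} (hy : ∀ i, y i ∈ Ω) :
    ConvexOn ℝ Ω fun z => cycShiftSum H (update y 0 z) := by
  refine ⟨hΩ, fun p hp q hq a b ha hb hab => ?_⟩
  simp only [cycShiftSum, smul_eq_mul, mul_sum, ← sum_add_distrib]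
  refine sum_le_sum fun i hi => ?_
  -- `σ^i` moves the slot `0` to the slot `-i ≠ 0`, where `H` is convex.
  have hne : (0 : Fin N) - i ≠ 0 := by
    simpa [sub_eq_zero, eq_comm] using Fin.natCast_ne_zero_of_mem_Icc hi
  have hterm : ∀ z, H (cyc^[i] (update y 0 z))
      = H (update (update (cyc^[i] y) (0 - i) z) 0 (y i)) := fun z => by
    rw [cyc_iterate_update, update_comm hne, show (y i : Ed d) = cyc^[i] y 0 by
      rw [cyc_iterate_apply, zero_add], update_eq_self]
  simp only [hterm]
  exact ((hH _ (hy _)).comp_update hΩ (cyc_iterate_mem hy i) _).2 hp hq ha hb hab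

structure IsAdmissible (Ω : Set (Ed d)) (u : ℕ → Ed d → Ed d) (H : (Fin N → Ed d) → ℝ) :
    Prop where
  eq_zero_of_notMem : ∀ x : Fin N → Ed d, ¬ (∀ i, x i ∈ Ω) → H x = 0
  linearPart_le : ∀ x : Fin N → Ed d, (∀ i, x i ∈ Ω) → linearPart u x ≤ H x
  nSubAntisymmetric : NSubAntisymmetric N Ω H
  convexOn_update_zero : ∀ x₁ ∈ Ω,
    ConvexOn ℝ {y : Fin N → Ed d | ∀ i, y i ∈ Ω} fun y => H (update y 0 x₁)

namespace IsAdmissible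

lemma le_neg_cycShiftSum_linearPart (hH : IsAdmissible Ω u H) (hx : ∀ i, x i ∈ Ω) :
    H x ≤ -cycShiftSum (linearPart u) x := by
  have hshift : cycShiftSum (linearPart u) x ≤ cycShiftSum H x :=
    sum_le_sum fun i _ => hH.linearPart_le _ (cyc_iterate_mem hx i)
  linarith [hH.nSubAntisymmetric.cycShiftSum_le_neg hx]

lemma apply_const (hH : IsAdmissible Ω u H) {z : Ed d} (hz : z ∈ Ω) :
    H (fun _ => z) = 0 := by
  have hsum := hH.nSubAntisymmetric _ fun _ => hz
  simp only [cyc_iterate_const, sum_const, card_range, nsmul_eq_mul] at hsum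
  have hlin := hH.linearPart_le _ fun _ => hz
  rw [linearPart_const] at hlin
  nlinarith [(Nat.cast_pos (α := ℝ)).2 (NeZero.pos N)]

lemma bddAbove_concavifySet (hH : IsAdmissible Ω u H) (hx : ∀ i, x i ∈ Ω) :
    BddAbove (concavifySet Ω (cycShiftSum H) x) :=
  ⟨-H x, fun _ => le_of_mem_concavifySet (fun _ => hH.nSubAntisymmetric.cycShiftSum_le_neg)
    (fun x₁ hx₁ => (hH.convexOn_update_zero x₁ hx₁).neg) hx⟩

lemma le_neg_concavify₂N (hH : IsAdmissible Ω u H) (hx : ∀ i, x i ∈ Ω) :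
    H x ≤ -concavify₂N N Ω (cycShiftSum H) x := by
  have := concavify₂N_le (fun _ => hH.nSubAntisymmetric.cycShiftSum_le_neg)
    (fun x₁ hx₁ => (hH.convexOn_update_zero x₁ hx₁).neg) hx
  linarith

end IsAdmissible

end Admissible

section Maximal

open Fin.NatCast

variable {d N : ℕ} [NeZero N] {Ω : Set (Ed d)} {u : ℕ → Ed d → Ed d}
  {H : (Fin N → Ed d) → ℝ}

lemma isAdmissible_indicator_linearPart (hΩ : Convex ℝ Ω) (hu : JointlyNMonotone N Ω u) :
    IsAdmissible Ω u ({x : Fin N → Ed d | ∀ i, x i ∈ Ω}.indicator (linearPart u)) := by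
  have hmem : ∀ {x : Fin N → Ed d}, (∀ i, x i ∈ Ω) →
      {y : Fin N → Ed d | ∀ i, y i ∈ Ω}.indicator (linearPart u) x = linearPart u x :=
    fun hx => Set.indicator_of_mem (s := {y : Fin N → Ed d | ∀ i, y i ∈ Ω}) hx _
  refine ⟨fun _ hx => Set.indicator_of_notMem (s := {y : Fin N → Ed d | ∀ i, y i ∈ Ω}) hx _,
    fun x hx => (hmem hx).ge, fun x hx => ?_,
    fun x₁ hx₁ => (convexOn_linearPart_update_zero hΩ u x₁).congr fun y hy =>
      (hmem (update_mem_of_forall_mem hy 0 hx₁)).symm⟩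
  rw [sum_congr rfl fun i _ => hmem (cyc_iterate_mem hx i)]
  exact hu.nSubAntisymmetric_linearPart x hx

lemma IsAdmissible.bddAbove_range_apply {c : Set ((Fin N → Ed d) → ℝ)}
    (hc : ∀ H ∈ c, IsAdmissible Ω u H) (x : Fin N → Ed d) :
    BddAbove (Set.range fun H : c => (H : (Fin N → Ed d) → ℝ) x) := by
  refine ⟨max (-cycShiftSum (linearPart u) x) 0, ?_⟩
  rintro _ ⟨⟨H, hH⟩, rfl⟩
  by_cases hx : ∀ i, x i ∈ Ω
  · exact le_max_of_le_left ((hc H hH).le_neg_cycShiftSum_linearPart hx)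
  · exact ((hc H hH).eq_zero_of_notMem x hx).trans_le (le_max_right _ _)

lemma IsAdmissible.ciSup (hΩ : Convex ℝ Ω) {c : Set ((Fin N → Ed d) → ℝ)} [Nonempty c]
    (hc : ∀ H ∈ c, IsAdmissible Ω u H) (hchain : IsChain (· ≤ ·) c) :
    IsAdmissible Ω u fun x => ⨆ H : c, (H : (Fin N → Ed d) → ℝ) x where
  eq_zero_of_notMem x hx :=
    (iSup_congr fun H : c => (hc H.1 H.2).eq_zero_of_notMem x hx).trans ciSup_const
  linearPart_le x hx :=
    let H₀ : c := Classical.arbitrary c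
    ((hc H₀ H₀.2).linearPart_le x hx).trans (le_ciSup (bddAbove_range_apply hc x) H₀)
  nSubAntisymmetric x _ :=
    (hchain.directed.mono_comp _ fun _ _ hHH' k => hHH' (cyc^[k] x)).sum_ciSup_le
      (range N) fun H => (hc H H.2).nSubAntisymmetric x ‹_›
  convexOn_update_zero x₁ hx₁ :=
    ConvexOn.ciSup (convex_setOf_forall_mem hΩ)
      (fun H => (hc H H.2).convexOn_update_zero x₁ hx₁)
      fun y _ => bddAbove_range_apply hc _

lemma exists_maximal_isAdmissible (hΩ : Convex ℝ Ω) (hu : JointlyNMonotone N Ω u) :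
    ∃ m : (Fin N → Ed d) → ℝ, Maximal (IsAdmissible Ω u) m := by
  obtain ⟨m, -, hm⟩ := zorn_le_nonempty₀ {H | IsAdmissible Ω u H}
    (fun c hc hchain H hH =>
      have : Nonempty c := ⟨⟨H, hH⟩⟩
      ⟨_, IsAdmissible.ciSup hΩ hc hchain, fun H hH x =>
        le_ciSup (IsAdmissible.bddAbove_range_apply hc x) ⟨H, hH⟩⟩)
    _ (isAdmissible_indicator_linearPart hΩ hu)
  exact ⟨m, hm⟩

/-- Moves `H` by `1/N` of the way towards `-concavify₂N (cycShiftSum H)` on `Ω^N`; `1/N` is the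
largest step that cannot break sub-antisymmetry. -/
def improve (Ω : Set (Ed d)) (H : (Fin N → Ed d) → ℝ) : (Fin N → Ed d) → ℝ :=
  {x | ∀ i, x i ∈ Ω}.indicator fun x => H x + (-concavify₂N N Ω (cycShiftSum H) x - H x) / N

lemma improve_of_forall_mem {x : Fin N → Ed d} (hx : ∀ i, x i ∈ Ω) :
    improve Ω H x = H x + (-concavify₂N N Ω (cycShiftSum H) x - H x) / N :=
  Set.indicator_of_mem (s := {y : Fin N → Ed d | ∀ i, y i ∈ Ω}) hx _

lemma improve_of_not_forall_mem {x : Fin N → Ed d} (hx : ¬ ∀ i, x i ∈ Ω) : improve Ω H x = 0 :=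
  Set.indicator_of_notMem (s := {y : Fin N → Ed d | ∀ i, y i ∈ Ω}) hx _

namespace IsAdmissible

lemma le_improve (hH : IsAdmissible Ω u H) : H ≤ improve Ω H := by
  intro x
  by_cases hx : ∀ i, x i ∈ Ω
  · rw [improve_of_forall_mem hx]
    have := hH.le_neg_concavify₂N hx
    have : 0 ≤ (-concavify₂N N Ω (cycShiftSum H) x - H x) / N := by
      apply div_nonneg <;> [linarith; positivity]
    linarith
  · rw [improve_of_not_forall_mem hx, hH.eq_zero_of_notMem x hx]

end IsAdmissible

lemma isAdmissible_improve (hΩ : Convex ℝ Ω) (hH : IsAdmissible Ω u H) :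
    IsAdmissible Ω u (improve Ω H) where
  eq_zero_of_notMem _ hx := improve_of_not_forall_mem hx
  linearPart_le x hx := (hH.linearPart_le x hx).trans (hH.le_improve x)
  nSubAntisymmetric x hx := by
    have hNpos : (0 : ℝ) < N := Nat.cast_pos.2 (NeZero.pos N)
    have hconc : ∑ i ∈ range N, -concavify₂N N Ω (cycShiftSum H) (cyc^[i] x)
        ≤ -((N - 1 : ℕ) * ∑ i ∈ range N, H (cyc^[i] x)) := by
      rw [← nsmul_eq_mul, ← sum_range_cycShiftSum_cyc_iterate, ← sum_neg_distrib]
      exact sum_le_sum fun i _ => neg_le_neg <|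
        le_concavify₂N (hH.bddAbove_concavifySet (cyc_iterate_mem hx i)) (cyc_iterate_mem hx i)
    rw [sum_congr rfl fun i _ => improve_of_forall_mem (cyc_iterate_mem hx i), sum_add_distrib,
      ← sum_div, sum_sub_distrib]
    rw [Nat.cast_sub (NeZero.pos N), Nat.cast_one] at hconc
    have : (∑ i ∈ range N, -concavify₂N N Ω (cycShiftSum H) (cyc^[i] x)
        - ∑ i ∈ range N, H (cyc^[i] x)) / N ≤ -∑ i ∈ range N, H (cyc^[i] x) := by
      rw [div_le_iff₀ hNpos]
      linarith
    linarith
  convexOn_update_zero x₁ hx₁ := by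
    have hNinv : (N : ℝ)⁻¹ ≤ 1 := inv_le_one_of_one_le₀ (Nat.one_le_cast.2 (NeZero.pos N))
    refine (((hH.convexOn_update_zero x₁ hx₁).smul (sub_nonneg.2 hNinv)).add
      ((concaveOn_concavify₂N_update_zero hΩ (fun _ => hH.bddAbove_concavifySet) hx₁).neg.smul
        (inv_nonneg.2 (Nat.cast_nonneg N)))).congr fun y hy => ?_
    simp only [improve_of_forall_mem (update_mem_of_forall_mem hy 0 hx₁), Pi.add_apply,
      Pi.neg_apply, smul_eq_mul]
    ring

lemma neg_concavify₂N_eq_of_maximal (hH : Maximal (IsAdmissible Ω u) H) (hΩ : Convex ℝ Ω)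
    {x : Fin N → Ed d} (hx : ∀ i, x i ∈ Ω) : -concavify₂N N Ω (cycShiftSum H) x = H x := by
  have hfix := congrFun (hH.eq_of_le (isAdmissible_improve hΩ hH.prop) hH.prop.le_improve) x
  rw [improve_of_forall_mem hx, eq_comm, add_eq_left, div_eq_zero_iff, sub_eq_zero] at hfix
  exact hfix.resolve_right (Nat.cast_ne_zero.2 (NeZero.ne N))

end Maximal

open Fin.NatCast in
theorem statement1_general {d : ℕ} (N : ℕ) [NeZero N]
    (Ω : Set (Ed d)) (hΩconv : Convex ℝ Ω)
    (u : ℕ → Ed d → Ed d)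
    (hmono : JointlyNMonotone N Ω u) :
    ∃ H : (Fin N → Ed d) → ℝ,
      -- `H` is `N`-sub-antisymmetric
      NSubAntisymmetric N Ω H ∧
      -- `H` vanishes on the diagonal of `Ω^N`
      (∀ x ∈ Ω, H (fun _ => x) = 0) ∧
      -- `H` is concave in the first variable
      (∀ x : Fin N → Ed d, (∀ i, x i ∈ Ω) →
        ConcaveOn ℝ Ω (fun z => H (Function.update x 0 z))) ∧
      -- `H` is jointly convex in the last `N-1` variables
      (∀ x₁ ∈ Ω, ConvexOn ℝ {y : Fin N → Ed d | ∀ i, y i ∈ Ω}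
        (fun y => H (Function.update y 0 x₁))) ∧
      -- the subgradient inequality representing `(u 1, …, u (N-1))`
      (∀ x ∈ Ω, ∀ y : Fin N → Ed d, (∀ i, y i ∈ Ω) →
        ∑ ℓ ∈ Icc 1 (N - 1), ⟪u ℓ x, y (ℓ : Fin N) - x⟫ ≤ H (Function.update y 0 x)) ∧
      -- the `N`-antisymmetry `H + H_{2,…,N} = 0`, where `H_{2,…,N}` is the concavification
      -- in the last `N-1` variables of `K(x) = ∑_{i=1}^{N-1} H(σ^i x)`
      (∀ x : Fin N → Ed d, (∀ i, x i ∈ Ω) →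
        H x + concavify₂N N Ω (fun z => ∑ i ∈ Icc 1 (N - 1), H (cyc^[i] z)) x = 0) := by
  obtain ⟨H, hmax⟩ := exists_maximal_isAdmissible hΩconv hmono
  have hH := hmax.prop
  have hfix : ∀ x : Fin N → Ed d, (∀ i, x i ∈ Ω) → -concavify₂N N Ω (cycShiftSum H) x = H x :=
    fun _ => neg_concavify₂N_eq_of_maximal hmax hΩconv
  refine ⟨H, hH.nSubAntisymmetric, fun _ => hH.apply_const, fun x hx => ?_,
    hH.convexOn_update_zero, fun x hx y hy => ?_, fun x hx => ?_⟩
  · refine (convexOn_concavify₂N_update_zero (fun _ => hH.bddAbove_concavifySet)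
      (fun _ => convexOn_cycShiftSum_update_zero hΩconv hH.convexOn_update_zero) hx).neg.congr
      fun z hz => hfix _ (update_mem_of_forall_mem hx 0 hz)
  · exact linearPart_update_zero u y x ▸ hH.linearPart_le _ (update_mem_of_forall_mem hy 0 hx)
  · rw [← hfix x hx]
    exact neg_add_cancel _

open Fin.NatCast in
theorem statement1 {d : ℕ} (N : ℕ) [NeZero N] (hN : 2 ≤ N)
    (Ω : Set (Ed d)) (hΩopen : IsOpen Ω) (hΩconv : Convex ℝ Ω)
    (hΩbdd : Bornology.IsBounded Ω) (hΩne : Ω.Nonempty)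
    (u : ℕ → Ed d → Ed d)
    (hubdd : ∀ ℓ ∈ Icc 1 (N - 1), ∃ C : ℝ, ∀ x ∈ Ω, ‖u ℓ x‖ ≤ C)
    (hmono : JointlyNMonotone N Ω u) :
    ∃ H : (Fin N → Ed d) → ℝ,
      -- `H` is `N`-sub-antisymmetric
      NSubAntisymmetric N Ω H ∧
      -- `H` vanishes on the diagonal of `Ω^N`
      (∀ x ∈ Ω, H (fun _ => x) = 0) ∧
      -- `H` is concave in the first variable
      (∀ x : Fin N → Ed d, (∀ i, x i ∈ Ω) →
        ConcaveOn ℝ Ω (fun z => H (Function.update x 0 z))) ∧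
      -- `H` is jointly convex in the last `N-1` variables
      (∀ x₁ ∈ Ω, ConvexOn ℝ {y : Fin N → Ed d | ∀ i, y i ∈ Ω}
        (fun y => H (Function.update y 0 x₁))) ∧
      -- the subgradient inequality representing `(u 1, …, u (N-1))`
      (∀ x ∈ Ω, ∀ y : Fin N → Ed d, (∀ i, y i ∈ Ω) →
        ∑ ℓ ∈ Icc 1 (N - 1), ⟪u ℓ x, y (ℓ : Fin N) - x⟫ ≤ H (Function.update y 0 x)) ∧
      -- the `N`-antisymmetry `H + H_{2,…,N} = 0`, where `H_{2,…,N}` is the concavification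
      -- in the last `N-1` variables of `K(x) = ∑_{i=1}^{N-1} H(σ^i x)`
      (∀ x : Fin N → Ed d, (∀ i, x i ∈ Ω) →
        H x + concavify₂N N Ω (fun z => ∑ i ∈ Icc 1 (N - 1), H (cyc^[i] z)) x = 0) :=
  statement1_general N Ω hΩconv u hmono
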